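/- Let N, k, t, v, r be natural numbers with k ≥ t ≥ 2, v ≥ 2 and 1 ≤ r ≤ v^t. The number of arrays A : Fin N → Fin k → Fin v for which there exists a t-subset C of columns such that the rows of A restricted to C take at most v^t − r distinct values (i.e., at least r of the v^t possible tuples are missing on C) is at most C(k,t) · C(v^t, r) · ((v^t − r) · v^(k−t))^N. -/

import Mathlib

/-- The number of distinct `t`-tuples `x : C → Fin v` covered by the rows of the array `A`
restricted to the column set `C`. -/
noncomputable def coverCount {N k v : ℕ} (A : Fin N → Fin k → Fin v) (C : Finset (Fin k)) : ℕ :=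
  Nat.card {x : C → Fin v // ∃ i : Fin N, (fun j : C => A i j) = x}

/-!
Union bound. If at least `r` tuples are missing on the column set `C`, then every row of the
array avoids some fixed `r`-set `S` of tuples on `C`. For fixed `C` and `S` a single row can be
chosen in `(v ^ t - r) * v ^ (k - t)` ways, and there are `C(k, t) * C(v ^ t, r)` pairs `(C, S)`.
-/

open Finset Fintype

section Restriction

variable {ι α : Type*} [Fintype ι] [DecidableEq ι] [Fintype α] [DecidableEq α]

def rowsAvoiding (C : Finset ι) (S : Finset (C → α)) : Finset (ι → α) :=
  {f | (fun i : C => f i) ∉ S}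

/-- A row is a free choice of its restriction to `C` and of its values off `C`. -/
lemma card_rowsAvoiding (C : Finset ι) (S : Finset (C → α)) :
    #(rowsAvoiding C S) = (card α ^ #C - #S) * card α ^ (card ι - #C) := by
  let e := (Equiv.piEquivPiSubtypeProd (· ∈ C) fun _ => α).subtypeEquiv
    (p := fun f => (fun i : C => f i) ∉ S) (q := fun p => p.1 ∉ S) fun _ => Iff.rfl
  rw [rowsAvoiding, ← Fintype.card_subtype,
    Fintype.card_congr (e.trans (Equiv.prodSubtypeFstEquivSubtypeProd (p := (· ∉ S)))),
    card_prod, Fintype.card_subtype_compl, Fintype.card_fun, Fintype.card_fun,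
    Fintype.card_coe, Fintype.card_coe,
    Fintype.card_subtype_compl, Fintype.card_coe]

end Restriction

lemma coverCount_eq_card_image {N k v : ℕ} (A : Fin N → Fin k → Fin v) (C : Finset (Fin k)) :
    coverCount A C = #(univ.image fun i (j : C) => A i j) := by
  rw [coverCount, Nat.card_eq_fintype_card, Fintype.card_subtype]
  congr 1
  ext x
  simp

lemma exists_missing_of_coverCount_le {N k v t r : ℕ} {A : Fin N → Fin k → Fin v}
    {C : Finset (Fin k)} (hC : #C = t) (hr : r ≤ v ^ t) (hA : coverCount A C ≤ v ^ t - r) :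
    ∃ S ∈ powersetCard r (univ : Finset (C → Fin v)),
      A ∈ piFinset fun _ => rowsAvoiding C S := by
  rw [coverCount_eq_card_image] at hA
  set covered := univ.image fun i (j : C) => A i j
  have hmissing : r ≤ #coveredᶜ := by
    rw [card_compl, Fintype.card_fun, Fintype.card_coe, Fintype.card_fin, hC]
    omega
  obtain ⟨S, hS, hSr⟩ := exists_subset_card_eq hmissing
  refine ⟨S, mem_powersetCard_univ.mpr hSr, Fintype.mem_piFinset.mpr fun i => ?_⟩
  simpa [rowsAvoiding] using fun hi => mem_compl.mp (hS hi) (mem_image_of_mem _ (mem_univ i))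

theorem stmt_10_general (N k t v r : ℕ) (hr2 : r ≤ v ^ t) :
    Nat.card {A : Fin N → Fin k → Fin v //
        ∃ C : Finset (Fin k), C.card = t ∧ coverCount A C ≤ v ^ t - r} ≤
      k.choose t * (v ^ t).choose r * ((v ^ t - r) * v ^ (k - t)) ^ N := by
  classical
  set M := ((v ^ t - r) * v ^ (k - t)) ^ N
  calc _ = #{A : Fin N → Fin k → Fin v |
          ∃ C : Finset (Fin k), #C = t ∧ coverCount A C ≤ v ^ t - r} :=
        Nat.card_eq_fintype_card.trans (Fintype.card_subtype _)
    _ ≤ #((powersetCard t univ).biUnion fun C => (powersetCard r univ).biUnion fun S =>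
          piFinset fun _ : Fin N => rowsAvoiding C S) := by
        refine card_le_card fun A hA => ?_
        obtain ⟨C, hC, hA⟩ := (mem_filter.mp hA).2
        obtain ⟨S, hS, hAS⟩ := exists_missing_of_coverCount_le hC hr2 hA
        exact mem_biUnion.mpr
          ⟨C, mem_powersetCard_univ.mpr hC, mem_biUnion.mpr ⟨S, hS, hAS⟩⟩
    _ ≤ #(powersetCard t (univ : Finset (Fin k))) * ((v ^ t).choose r * M) := by
        refine card_biUnion_le_card_mul _ _ _ fun C hC => ?_
        rw [mem_powersetCard_univ] at hC
        refine (card_biUnion_le_card_mul _ _ M fun S hS => ?_).trans_eq (by simp [hC])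
        rw [mem_powersetCard_univ] at hS
        simp [M, card_piFinset, card_rowsAvoiding, hC, hS]
    _ = k.choose t * (v ^ t).choose r * M := by simp [mul_assoc]

theorem stmt_10 (N k t v r : ℕ) (ht : 2 ≤ t) (htk : t ≤ k) (hv : 2 ≤ v)
    (hr1 : 1 ≤ r) (hr2 : r ≤ v ^ t) :
    Nat.card {A : Fin N → Fin k → Fin v //
        ∃ C : Finset (Fin k), C.card = t ∧ coverCount A C ≤ v ^ t - r} ≤
      k.choose t * (v ^ t).choose r * ((v ^ t - r) * v ^ (k - t)) ^ N :=
  stmt_10_general N k t v r hr2
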